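/- For positive semidefinite matrices ρ and σ, ρ^{1/2}(ρ^{-1} # σ)ρ^{1/2} = (ρ^{1/2} σ ρ^{1/2})^{1/2}, where ρ^{-1} denotes the Moore–Penrose pseudoinverse and # the (pseudoinverse-based) matrix geometric mean A # B := A^{1/2}(A^{-1/2} B A^{-1/2})^{1/2} A^{1/2}. -/

import Mathlib

open Matrix Kronecker
open scoped ComplexOrder

noncomputable section
attribute [local instance] Classical.propDecidable

/-- Moore–Penrose pseudoinverse of a square complex matrix. -/
def pinv {n : Type*} [Fintype n] [DecidableEq n] (A : Matrix n n ℂ) : Matrix n n ℂ :=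
  if h : ∃ B : Matrix n n ℂ,
      A * B * A = A ∧ B * A * B = B ∧ (A * B)ᴴ = A * B ∧ (B * A)ᴴ = B * A
  then h.choose else 0

/-- Positive semidefinite square root (junk value `0` if the matrix is not PSD). -/
def msqrt {n : Type*} [Fintype n] [DecidableEq n] (A : Matrix n n ℂ) : Matrix n n ℂ :=
  if h : A.PosSemidef then (h.1.eigenvectorUnitary : Matrix n n ℂ) *
    diagonal (((↑) : ℝ → ℂ) ∘ Real.sqrt ∘ h.1.eigenvalues) *
    (star h.1.eigenvectorUnitary : Matrix n n ℂ) else 0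

/-- `sgn(X) = U sgn(Σ) V*` for an SVD `X = U Σ V*`; equivalently `X (X* X)^{-1/2}`
with the Moore–Penrose pseudoinverse. -/
def msgn {n : Type*} [Fintype n] [DecidableEq n] (X : Matrix n n ℂ) : Matrix n n ℂ :=
  X * pinv (msqrt (Xᴴ * X))

/-- Matrix geometric mean `A # B = A^{1/2} (A^{-1/2} B A^{-1/2})^{1/2} A^{1/2}`
(with Moore–Penrose pseudoinverses). -/
def geo {n : Type*} [Fintype n] [DecidableEq n] (A B : Matrix n n ℂ) : Matrix n n ℂ :=
  msqrt A * msqrt (pinv (msqrt A) * B * pinv (msqrt A)) * msqrt A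

/-- The unnormalized maximally entangled state `|Ω⟩ = ∑ i, |i⟩ ⊗ |i⟩`. -/
def omegaVec (d : ℕ) : Fin d × Fin d → ℂ := fun p => if p.1 = p.2 then 1 else 0

/-- Reduced density matrix of `|C⟩⟨C|` on the first subsystem
(partial trace over the second subsystem). -/
def reducedA {d : ℕ} (C : Fin d × Fin d → ℂ) : Matrix (Fin d) (Fin d) ℂ :=
  Matrix.of fun i j => ∑ k, C (i, k) * star (C (j, k))

/-- Partial trace over the first subsystem of the operator `|D⟩⟨C|`. -/
def trA {d : ℕ} (D C : Fin d × Fin d → ℂ) : Matrix (Fin d) (Fin d) ℂ :=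
  Matrix.of fun j l => ∑ i, D (i, j) * star (C (i, l))

/-- `ℓ²→ℓ²` operator norm (largest singular value). -/
def opNorm {n : Type*} [Fintype n] [DecidableEq n] (A : Matrix n n ℂ) : ℝ :=
  ‖(Matrix.toEuclideanCLM (𝕜 := ℂ) A : EuclideanSpace ℂ n →L[ℂ] EuclideanSpace ℂ n)‖

/-- `P` is the orthogonal projection onto the image (column space) of `A`. -/
def IsOrthProjOnto {n : Type*} [Fintype n] [DecidableEq n] (P A : Matrix n n ℂ) : Prop :=
  Pᴴ = P ∧ P * P = P ∧ LinearMap.range P.mulVecLin = LinearMap.range A.mulVecLin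

/-- `η` is the smallest nonzero eigenvalue of the Hermitian matrix `M`. -/
def IsSmallestNonzeroEigenvalue {n : Type*} [Fintype n] [DecidableEq n]
    (M : Matrix n n ℂ) (η : ℝ) : Prop :=
  ∃ hM : M.IsHermitian, η ≠ 0 ∧ (∃ i, hM.eigenvalues i = η) ∧
    ∀ i, hM.eigenvalues i ≠ 0 → η ≤ hM.eigenvalues i

/-!
Put `S = ρ^{1/2}` and `T = S⁺`. Through the functional calculus of `ρ` (where `⁺` is `x ↦ x⁻¹`
with `0⁻¹ = 0`) one gets `(ρ⁺)^{1/2} = T` and `T⁺ = S`, so the left-hand side is `P M P` with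
`P = S T` the orthogonal projection onto the image of `ρ` and `M = (S σ S)^{1/2}`. As `√` vanishes
at `0`, `M = X g(X)` for `X = S σ S`, hence the image of `M` lies in that of `X`, which lies in that
of `S`; therefore `P M = M = M P`.
-/

open scoped MatrixOrder

section MoorePenrose

variable {n : Type*} [Fintype n]

def IsMoorePenroseInverse (A B : Matrix n n ℂ) : Prop :=
  A * B * A = A ∧ B * A * B = B ∧ (A * B)ᴴ = A * B ∧ (B * A)ᴴ = B * A

namespace IsMoorePenroseInverse

variable {A B C : Matrix n n ℂ}

theorem symm (h : IsMoorePenroseInverse A B) : IsMoorePenroseInverse B A :=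
  ⟨h.2.1, h.1, h.2.2.2, h.2.2.1⟩

theorem unique (hB : IsMoorePenroseInverse A B) (hC : IsMoorePenroseInverse A C) : B = C := by
  obtain ⟨hB₁, hB₂, hB₃, hB₄⟩ := hB
  obtain ⟨hC₁, hC₂, hC₃, hC₄⟩ := hC
  have hAB : A * B = A * C := by
    calc A * B = (A * C * A * B)ᴴ := by rw [hC₁, hB₃]
      _ = (A * B)ᴴ * (A * C)ᴴ := by rw [← conjTranspose_mul, Matrix.mul_assoc (A * C)]
      _ = A * C := by rw [hB₃, hC₃, ← Matrix.mul_assoc, hB₁]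
  have hBA : B * A = C * A := by
    calc B * A = (B * (A * C * A))ᴴ := by rw [hC₁, hB₄]
      _ = (C * A)ᴴ * (B * A)ᴴ := by rw [← conjTranspose_mul, Matrix.mul_assoc, Matrix.mul_assoc]
      _ = C * A := by rw [hB₄, hC₄, Matrix.mul_assoc, ← Matrix.mul_assoc A, hB₁]
  calc B = B * A * B := hB₂.symm
    _ = C * A * C := by rw [Matrix.mul_assoc, hAB, ← Matrix.mul_assoc, hBA]
    _ = C := hC₂

end IsMoorePenroseInverse

variable [DecidableEq n]

theorem IsMoorePenroseInverse.pinv_eq {A B : Matrix n n ℂ} (h : IsMoorePenroseInverse A B) :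
    pinv A = B := by
  have hex : ∃ B, IsMoorePenroseInverse A B := ⟨B, h⟩
  exact (dif_pos hex).trans (hex.choose_spec.unique h)

end MoorePenrose

namespace Matrix

variable {n : Type*} [Fintype n] [DecidableEq n] {A : Matrix n n ℂ}

theorem IsHermitian.isMoorePenroseInverse_cfc_inv (hA : A.IsHermitian) :
    IsMoorePenroseInverse A (cfc (·⁻¹ : ℝ → ℝ) A) := by
  set T := cfc (·⁻¹ : ℝ → ℝ) A
  have hT : Tᴴ = T := (cfc_predicate (R := ℝ) _ A).isHermitian.eq
  have hcomm : A * T = T * A := ((Commute.refl A).cfc_real _).symm.eq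
  have hsandwich (a b : ℝ → ℝ) (hab : ∀ x, a x * b x * a x = a x) :
      cfc a A * cfc b A * cfc a A = cfc a A := by
    rw [← cfc_mul a b A ((Set.toFinite _).continuousOn _) ((Set.toFinite _).continuousOn _),
      ← cfc_mul _ a A ((Set.toFinite _).continuousOn _) ((Set.toFinite _).continuousOn _)]
    exact cfc_congr fun x _ => hab x
  have hAT : (A * T)ᴴ = A * T := by rw [conjTranspose_mul, hT, hA.eq, hcomm]
  refine ⟨?_, ?_, hAT, hcomm ▸ hAT⟩
  · simpa only [cfc_id' ℝ A] using hsandwich (fun x => x) (·⁻¹) mul_inv_mul_cancel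
  · simpa only [cfc_id' ℝ A] using hsandwich (·⁻¹) (fun x => x) fun x => by
      simpa only [inv_inv] using mul_inv_mul_cancel x⁻¹

theorem IsHermitian.pinv_eq_cfc_inv (hA : A.IsHermitian) : pinv A = cfc (·⁻¹ : ℝ → ℝ) A :=
  hA.isMoorePenroseInverse_cfc_inv.pinv_eq

theorem IsHermitian.isMoorePenroseInverse_pinv (hA : A.IsHermitian) :
    IsMoorePenroseInverse A (pinv A) :=
  hA.pinv_eq_cfc_inv ▸ hA.isMoorePenroseInverse_cfc_inv

theorem IsHermitian.pinv_pinv (hA : A.IsHermitian) : pinv (pinv A) = A :=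
  hA.isMoorePenroseInverse_pinv.symm.pinv_eq

theorem IsHermitian.commute_pinv (hA : A.IsHermitian) : Commute A (pinv A) :=
  hA.pinv_eq_cfc_inv ▸ ((Commute.refl A).cfc_real _).symm

theorem PosSemidef.msqrt_eq_cfc_sqrt (hA : A.PosSemidef) : msqrt A = cfc Real.sqrt A := by
  rw [msqrt, dif_pos hA, hA.1.cfc_eq, IsHermitian.cfc]
  rfl

theorem PosSemidef.isHermitian_msqrt (hA : A.PosSemidef) : (msqrt A).IsHermitian :=
  hA.msqrt_eq_cfc_sqrt ▸ (cfc_predicate (R := ℝ) _ A).isHermitian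

theorem PosSemidef.msqrt_pinv (hA : A.PosSemidef) : msqrt (pinv A) = pinv (msqrt A) := by
  have hspec := spectrum_nonneg_of_nonneg (𝕜 := ℝ) hA.nonneg
  have hpinv : (pinv A).PosSemidef := by
    rw [hA.1.pinv_eq_cfc_inv]
    exact (cfc_nonneg fun x hx => inv_nonneg.2 (hspec hx)).posSemidef
  rw [hpinv.msqrt_eq_cfc_sqrt, hA.isHermitian_msqrt.pinv_eq_cfc_inv, hA.1.pinv_eq_cfc_inv,
    hA.msqrt_eq_cfc_sqrt,
    ← cfc_comp' _ _ A ((Set.toFinite _).continuousOn _) ((Set.toFinite _).continuousOn _),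
    ← cfc_comp' _ _ A ((Set.toFinite _).continuousOn _) ((Set.toFinite _).continuousOn _)]
  exact cfc_congr fun x _ => Real.sqrt_inv x

theorem mul_cfc_mul_eq_of_mul_eq {P X : Matrix n n ℂ} (hP : Pᴴ = P) (hX : X.IsHermitian)
    (hPX : P * X = X) {f : ℝ → ℝ} (hf : f 0 = 0) : P * cfc f X * P = cfc f X := by
  have hfX : cfc f X = X * cfc (fun x => x⁻¹ * f x) X :=
    calc cfc f X = cfc (fun x => x * (x⁻¹ * f x)) X := by
          refine cfc_congr fun x _ => ?_
          rcases eq_or_ne x 0 with rfl | hx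
          · simp [hf]
          · field_simp
      _ = X * cfc (fun x => x⁻¹ * f x) X := by
          rw [cfc_mul _ _ X ((Set.toFinite _).continuousOn _) ((Set.toFinite _).continuousOn _),
            cfc_id' ℝ X]
  have hPf : P * cfc f X = cfc f X := by rw [hfX, ← Matrix.mul_assoc, hPX]
  have hf_herm : (cfc f X)ᴴ = cfc f X := (cfc_predicate (R := ℝ) f X).isHermitian.eq
  calc P * cfc f X * P = (P * cfc f X)ᴴ := by rw [conjTranspose_mul, hP, hf_herm, hPf]
    _ = cfc f X := by rw [hPf, hf_herm]

end Matrix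

theorem geo_mean_sandwich {n : Type*} [Fintype n] [DecidableEq n]
    (ρ σ : Matrix n n ℂ) (hρ : ρ.PosSemidef) (hσ : σ.PosSemidef) :
    msqrt ρ * geo (pinv ρ) σ * msqrt ρ = msqrt (msqrt ρ * σ * msqrt ρ) := by
  set S := msqrt ρ
  have hS : S.IsHermitian := hρ.isHermitian_msqrt
  have hSσS : (S * σ * S).PosSemidef := by
    simpa only [hS.eq] using hσ.mul_mul_conjTranspose_same S
  obtain ⟨hSTS, -, hST, -⟩ := hS.isMoorePenroseInverse_pinv
  have hP : S * pinv S * (S * σ * S) = S * σ * S := by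
    simp only [← Matrix.mul_assoc, hSTS]
  have hgeo : geo (pinv ρ) σ = pinv S * msqrt (S * σ * S) * pinv S := by
    rw [geo, hρ.msqrt_pinv, hS.pinv_pinv]
  calc S * geo (pinv ρ) σ * S = S * pinv S * msqrt (S * σ * S) * (S * pinv S) := by
        simp only [hgeo, Matrix.mul_assoc]
        rw [← hS.commute_pinv.eq]
    _ = msqrt (S * σ * S) := by
        rw [hSσS.msqrt_eq_cfc_sqrt]
        exact mul_cfc_mul_eq_of_mul_eq hST hSσS.isHermitian hP Real.sqrt_zero
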